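/- Let p be an odd prime and let λ be a strict partition with m parts a_1 > a_2 > … > a_m such that a_i = p for some index i. Let μ be the strict partition whose parts are those of λ with the part p removed (a p-bar removal of type 2). Then h̄_{λ,p'} ≡ (−1)^{p−m+i} · h̄_{μ,p'} (mod p). -/

import Mathlib

/-!
Modulo `p`, the `p'`-part of the bar-length product factors over the rows. Deleting the part `p`
does not change the rows of the smaller parts, and in the row of a part `a > p` it only trades the
bar length `a + p` for `a - p`: the two are congruent mod `p`, so the row's `p'`-product is unchanged.
The row of `p` itself is `({1, …, p} ∪ {p + b}) \ {p - b}`, `b` running over the `k` parts below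
`p`; its `p'`-part is `({1, …, p - 1} \ {p - b}) ∪ {p + b}`, with product
`(p - 1)! · ∏ b / ((-1)^k ∏ b) ≡ (-1)^(k + 1)` by Wilson's theorem. Finally `p - m + i = p - k`,
which has the parity of `k + 1` as `p` is odd.
-/

/-- The multiset of bar lengths of a strict partition, given by its set of parts `X`:
for each part `a`, the row contributes `({1, …, a} ∪ {a + b : b ∈ X, b < a}) \ {a - b : b ∈ X, b < a}`. -/
def barLengths (X : Finset ℕ) : Multiset ℕ :=
  X.val.bind fun a =>
    (((Finset.Icc 1 a) ∪ (X.filter (· < a)).image (fun b => a + b)) \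
      ((X.filter (· < a)).image (fun b => a - b))).val

/-- The product of all bar lengths of the strict partition with parts `X`
that are not divisible by `p`. -/
def barProd' (p : ℕ) (X : Finset ℕ) : ℕ :=
  (Multiset.filter (fun l => ¬ p ∣ l) (barLengths X)).prod

open Finset

def barRow (X : Finset ℕ) (a : ℕ) : Finset ℕ :=
  ((Icc 1 a) ∪ (X.filter (· < a)).image (fun b => a + b)) \
    ((X.filter (· < a)).image (fun b => a - b))

def barRowProd' (p : ℕ) (X : Finset ℕ) (a : ℕ) : ℕ :=
  ∏ l ∈ (barRow X a).filter (fun l => ¬ p ∣ l), l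

theorem barProd'_eq_prod_barRowProd' (p : ℕ) (X : Finset ℕ) :
    barProd' p X = ∏ a ∈ X, barRowProd' p X a := by
  rw [barProd', barLengths, Multiset.filter_bind, Multiset.prod_bind, prod_eq_multiset_prod]
  refine congrArg _ (Multiset.map_congr rfl fun a _ => ?_)
  rw [barRowProd', ← filter_val, prod_val]
  rfl

theorem Finset.prod_erase_insert_of_apply_eq {ι M : Type*} [DecidableEq ι] [CommMonoid M]
    {s : Finset ι} {x y : ι} (f : ι → M) (hx : x ∈ s) (hy : y ∉ s) (hxy : f x = f y) :
    ∏ i ∈ (insert y s).erase x, f i = ∏ i ∈ s, f i := by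
  have hne : y ≠ x := by rintro rfl; exact hy hx
  rw [erase_insert_of_ne hne, prod_insert (fun h => hy (mem_of_mem_erase h)), ← hxy,
    mul_prod_erase s f hx]

theorem card_eq_card_filter_lt_add_card_filter_gt {α : Type*} [LinearOrder α] {X : Finset α}
    {a : α} (ha : a ∈ X) : #X = #(X.filter (· < a)) + #(X.filter (a < ·)) + 1 := by
  rw [← card_erase_add_one ha, ← card_union_of_disjoint]
  · congr 2
    ext x
    simp only [mem_erase, mem_union, mem_filter]
    grind
  · exact disjoint_filter.2 fun x _ h h' => lt_asymm h h'

section barRow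

variable {p : ℕ} {X : Finset ℕ} {a b : ℕ}

theorem barRow_erase_of_lt (h : a < b) : barRow (X.erase b) a = barRow X a := by
  rw [barRow, barRow, filter_erase, erase_eq_of_notMem (by simp [h.not_gt])]

theorem barRow_eq_erase_insert_barRow_erase (hb : b ∈ X) (h0 : 0 < b) (h : b < a) :
    barRow X a = (insert (a + b) (barRow (X.erase b) a)).erase (a - b) := by
  have hfilter : X.filter (· < a) = insert b ((X.erase b).filter (· < a)) := by
    conv_lhs => rw [← insert_erase hb]
    rw [filter_insert, if_pos h]
  have hnotMem : a + b ∉ ((X.erase b).filter (· < a)).image (fun c => a - c) := by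
    simp only [mem_image, mem_filter, not_exists]
    omega
  rw [barRow, barRow, hfilter, image_insert, image_insert, union_insert, sdiff_insert,
    insert_sdiff_of_notMem _ hnotMem]

theorem sub_mem_barRow_erase (h : b < a) : a - b ∈ barRow (X.erase b) a := by
  simp only [barRow, mem_sdiff, mem_union, mem_Icc, mem_image, mem_filter, mem_erase, not_exists]
  exact ⟨Or.inl (by omega), fun c hc => by omega⟩

theorem add_notMem_barRow_erase (hb : 0 < b) : a + b ∉ barRow (X.erase b) a := by
  simp only [barRow, mem_sdiff, mem_union, mem_Icc, mem_image, mem_filter, mem_erase]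
  omega

theorem natCast_barRowProd' :
    (barRowProd' p X a : ZMod p) =
      ∏ l ∈ barRow X a, if (l : ZMod p) = 0 then 1 else (l : ZMod p) := by
  rw [barRowProd', Nat.cast_prod, prod_filter]
  refine prod_congr rfl fun l _ => ?_
  simp only [ZMod.natCast_eq_zero_iff]
  split_ifs <;> rfl

theorem natCast_barRowProd'_erase_of_dvd (hb : b ∈ X) (h0 : 0 < b) (hpb : p ∣ b) (hab : a ≠ b) :
    (barRowProd' p (X.erase b) a : ZMod p) = barRowProd' p X a := by
  rcases hab.lt_or_gt with h | h
  · rw [barRowProd', barRowProd', barRow_erase_of_lt h]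
  have hcast : ((a - b : ℕ) : ZMod p) = ((a + b : ℕ) : ZMod p) := by
    rw [Nat.cast_sub h.le, Nat.cast_add, (ZMod.natCast_eq_zero_iff b p).2 hpb, sub_zero, add_zero]
  rw [natCast_barRowProd', natCast_barRowProd', barRow_eq_erase_insert_barRow_erase hb h0 h,
    prod_erase_insert_of_apply_eq _ (sub_mem_barRow_erase h) (add_notMem_barRow_erase h0)
      (by simp only [hcast])]

theorem natCast_barProd'_eq_barRowProd'_mul (hb : b ∈ X) (h0 : 0 < b) (hpb : p ∣ b) :
    (barProd' p X : ZMod p) = barRowProd' p X b * barProd' p (X.erase b) := by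
  simp only [barProd'_eq_prod_barRowProd', Nat.cast_prod]
  rw [← mul_prod_erase X _ hb]
  exact congrArg _ (prod_congr rfl fun a ha =>
    (natCast_barRowProd'_erase_of_dvd hb h0 hpb (ne_of_mem_erase ha)).symm)

theorem filter_barRow_self (hX : 0 ∉ X) :
    (barRow X p).filter (fun l => ¬ p ∣ l) =
      (Ico 1 p ∪ (X.filter (· < p)).image (fun b => p + b)) \
        (X.filter (· < p)).image (fun b => p - b) := by
  ext l
  have hIcc : (1 ≤ l ∧ l ≤ p) ∧ ¬ p ∣ l ↔ 1 ≤ l ∧ l < p := by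
    constructor
    · rintro ⟨⟨h1, h2⟩, hd⟩
      exact ⟨h1, h2.lt_of_ne fun h => hd (h ▸ dvd_rfl)⟩
    · rintro ⟨h1, h2⟩
      exact ⟨⟨h1, h2.le⟩, fun hd => absurd (Nat.le_of_dvd h1 hd) (by omega)⟩
  have hadd : (∃ b, (b ∈ X ∧ b < p) ∧ p + b = l) → ¬ p ∣ l := by
    rintro ⟨b, ⟨hbX, hbp⟩, rfl⟩ hd
    have hb0 : 0 < b := Nat.pos_of_ne_zero fun h => hX (h ▸ hbX)
    exact absurd (Nat.le_of_dvd hb0 ((Nat.dvd_add_right dvd_rfl).1 hd)) (by omega)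
  simp only [barRow, mem_filter, mem_sdiff, mem_union, mem_Icc, mem_Ico, mem_image]
  constructor
  · rintro ⟨⟨h | h, hB⟩, hd⟩
    · exact ⟨Or.inl (hIcc.1 ⟨h, hd⟩), hB⟩
    · exact ⟨Or.inr h, hB⟩
  · rintro ⟨h | h, hB⟩
    · exact ⟨⟨Or.inl (hIcc.2 h).1, hB⟩, (hIcc.2 h).2⟩
    · exact ⟨⟨Or.inr h, hB⟩, hadd h⟩

theorem barRowProd'_self_mul_prod_sub (hp : 0 < p) (hX : 0 ∉ X) :
    barRowProd' p X p * ∏ b ∈ X.filter (· < p), (p - b) =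
      (p - 1).factorial * ∏ b ∈ X.filter (· < p), (p + b) := by
  set S := X.filter (· < p)
  have hS : ∀ b ∈ S, 0 < b ∧ b < p := fun b hb =>
    ⟨Nat.pos_of_ne_zero fun h => hX (h ▸ (mem_filter.1 hb).1), (mem_filter.1 hb).2⟩
  have hsub : S.image (fun b => p - b) ⊆ Ico 1 p ∪ S.image (fun b => p + b) := by
    intro l hl
    obtain ⟨b, hb, rfl⟩ := mem_image.1 hl
    have := hS b hb
    exact mem_union_left _ (mem_Ico.2 ⟨by omega, by omega⟩)
  have hdisj : Disjoint (Ico 1 p) (S.image (fun b => p + b)) := by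
    simp only [disjoint_left, mem_Ico, mem_image, not_exists, not_and]
    omega
  have hinj : Set.InjOn (fun b => p - b) S := fun b hb c hc h => by
    have := hS b hb; have := hS c hc; simp only at h; omega
  calc barRowProd' p X p * ∏ b ∈ S, (p - b)
      = (∏ l ∈ (Ico 1 p ∪ S.image (fun b => p + b)) \ S.image (fun b => p - b), l) *
          ∏ l ∈ S.image (fun b => p - b), l := by
        rw [barRowProd', filter_barRow_self hX, prod_image hinj]
    _ = ∏ l ∈ Ico 1 p ∪ S.image (fun b => p + b), l := prod_sdiff hsub
    _ = (p - 1).factorial * ∏ b ∈ S, (p + b) := by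
        rw [prod_union hdisj, prod_image fun b _ c _ h => Nat.add_left_cancel h,
          ← prod_Ico_id_eq_factorial, Nat.sub_add_cancel hp]

theorem natCast_barRowProd'_self [Fact p.Prime] (hX : 0 ∉ X) :
    (barRowProd' p X p : ZMod p) = (-1) ^ (#(X.filter (· < p)) + 1) := by
  set S := X.filter (· < p)
  set P := ∏ b ∈ S, (b : ZMod p)
  have hP : P ≠ 0 := prod_ne_zero_iff.2 fun b hb => by
    rw [Ne, ZMod.natCast_eq_zero_iff]
    exact Nat.not_dvd_of_pos_of_lt (Nat.pos_of_ne_zero fun h => hX (h ▸ (mem_filter.1 hb).1))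
      (mem_filter.1 hb).2
  have hsub : ∏ b ∈ S, ((p - b : ℕ) : ZMod p) = (-1) ^ #S * P := by
    rw [← prod_neg]
    exact prod_congr rfl fun b hb => by
      rw [Nat.cast_sub (mem_filter.1 hb).2.le, ZMod.natCast_self, zero_sub]
  have hadd : ∏ b ∈ S, ((p + b : ℕ) : ZMod p) = P := by simp [P]
  have key : (barRowProd' p X p : ZMod p) * ((-1) ^ #S * P) = -1 * P := by
    rw [← hsub, ← hadd, ← ZMod.wilsons_lemma]
    simpa only [Nat.cast_mul, Nat.cast_prod] using congrArg (Nat.cast : ℕ → ZMod p)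
      (barRowProd'_self_mul_prod_sub (Fact.out : p.Prime).pos hX)
  have hunit : ((-1 : ZMod p) ^ #S) ^ 2 = 1 := by
    rw [← pow_mul, mul_comm, pow_mul, neg_one_sq, one_pow]
  have hcancel : (barRowProd' p X p : ZMod p) * (-1) ^ #S = -1 :=
    mul_right_cancel₀ hP (by linear_combination key)
  linear_combination (-1 : ZMod p) ^ #S * hcancel - (barRowProd' p X p : ZMod p) * hunit

end barRow

/-- Here `m = X.card` is the number of parts, and
`i = (X.filter (p < ·)).card + 1` is the index of the part `p` when the parts are
listed in decreasing order `a₁ > a₂ > … > a_m`.  The exponent `p - m + i` is taken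
in `ℤ` and the sign `(-1)^(p - m + i)` is computed in `ℤˣ`. -/
theorem stmt2 (p : ℕ) (hp : p.Prime) (hodd : Odd p)
    (X : Finset ℕ) (hX : 0 ∉ X) (hpX : p ∈ X) :
    (barProd' p X : ℤ) ≡
      (((-1 : ℤˣ) ^ ((p : ℤ) - (X.card : ℤ) + (((X.filter fun b => p < b).card : ℤ) + 1)) : ℤˣ) : ℤ)
        * (barProd' p (X.erase p) : ℤ) [ZMOD p] := by
  have : Fact p.Prime := ⟨hp⟩
  set k := #(X.filter (· < p))
  rw [← Int.negOnePow_def, (Int.negOnePow_eq_iff _ ((k + 1 : ℕ) : ℤ)).2 ?parity,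
    Int.coe_negOnePow_natCast, ← ZMod.intCast_eq_intCast_iff]
  case parity =>
    obtain ⟨t, rfl⟩ := hodd
    rw [card_eq_card_filter_lt_add_card_filter_gt hpX]
    exact ⟨t - k, by push_cast; ring⟩
  push_cast
  rw [natCast_barProd'_eq_barRowProd'_mul hpX hp.pos dvd_rfl, natCast_barRowProd'_self hX]
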